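/- Let f : ℝ^n → ℝ^m be a Lipschitz map with Lipschitz constant 1 and E ⊂ ℝ^n nonempty and compact. Then the lower box dimension of f(E) is at most the lower m-box dimension profile of E: liminf_{r→0} log N_r(f(E))/(−log r) ≤ liminf_{r→0} log C_r^m(E)/(−log r). -/

import Mathlib

open MeasureTheory Metric Classical Filter

/-- The kernel φ_r^s(x) = min{1, (r/|x|)^s}, with value 1 at x = 0. -/
noncomputable def phiKer (n : ℕ) (s r : ℝ) (x : EuclideanSpace ℝ (Fin n)) : ℝ :=
  if x = 0 then 1 else min 1 ((r / ‖x‖) ^ s)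

/-- N_r(E): the minimal number of sets of diameter at most r needed to cover E. -/
noncomputable def coverNum {X : Type*} [PseudoMetricSpace X] (E : Set X) (r : ℝ) : ℕ :=
  sInf {k | ∃ S : Finset (Set X), S.card = k ∧ (∀ A ∈ S, Metric.diam A ≤ r) ∧ E ⊆ ⋃₀ ↑S}

/-- The capacity C_r^s(E): reciprocal of the infimal energy over probability
measures supported on the closure of E. -/
noncomputable def capacity (n : ℕ) (s r : ℝ) (E : Set (EuclideanSpace ℝ (Fin n))) : ℝ :=
  (sInf {I : ℝ | ∃ μ : Measure (EuclideanSpace ℝ (Fin n)),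
    IsProbabilityMeasure μ ∧ μ (closure E)ᶜ = 0 ∧
      I = ∫ x, ∫ y, phiKer n s r (x - y) ∂μ ∂μ})⁻¹

/-- The lower s-box dimension profile of E. -/
noncomputable def lowerProfile (n : ℕ) (s : ℝ) (E : Set (EuclideanSpace ℝ (Fin n))) : ℝ :=
  liminf (fun r => Real.log (capacity n s r E) / (-Real.log r)) (nhdsWithin 0 (Set.Ioi 0))

/-- The upper s-box dimension profile of E. -/
noncomputable def upperProfile (n : ℕ) (s : ℝ) (E : Set (EuclideanSpace ℝ (Fin n))) : ℝ :=
  limsup (fun r => Real.log (capacity n s r E) / (-Real.log r)) (nhdsWithin 0 (Set.Ioi 0))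

/-- The lower box dimension of a bounded set, via covering numbers. -/
noncomputable def lowerBoxDim {X : Type*} [PseudoMetricSpace X] (E : Set X) : ℝ :=
  liminf (fun r => Real.log (coverNum E r) / (-Real.log r)) (nhdsWithin 0 (Set.Ioi 0))

/-- The upper box dimension of a bounded set, via covering numbers. -/
noncomputable def upperBoxDim {X : Type*} [PseudoMetricSpace X] (E : Set X) : ℝ :=
  limsup (fun r => Real.log (coverNum E r) / (-Real.log r)) (nhdsWithin 0 (Set.Ioi 0))

/-!
Take a maximal `r / 2`-separated set `P ⊆ f(E)`. Its `r / 2`-balls cover `f(E)`, so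
`N_r(f(E)) ≤ #P`. Lift `P` to points of `E` and test the capacity against the uniform measure
on the lifts: since `f` is 1-Lipschitz, `φ_r^m(x - y) ≤ φ_r^m(f x - f y)`, so its energy is at most
`#P⁻¹` times the largest discrete potential `∑_q φ_r^m(p - q)` of `P` in `ℝ^m`. Counting the
points of `P` in dyadic shells around `p` by volume bounds that potential by `(K + 1) 10^m` as soon
as `diam f(E) < 2^K r`. Hence `N_r(f(E)) ≤ (K + 1) 10^m C_r^m(E)` with `K = O(log (1 / r))`, and
a logarithmic factor does not affect the exponent `log N_r / log (1 / r)`.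
-/

open Real
open scoped ENNReal NNReal Topology

section Kernel

variable {n m : ℕ} {s r : ℝ}

lemma phiKer_zero : phiKer n s r 0 = 1 := if_pos rfl

lemma phiKer_of_ne_zero {x : EuclideanSpace ℝ (Fin n)} (hx : x ≠ 0) :
    phiKer n s r x = min 1 ((r / ‖x‖) ^ s) := if_neg hx

lemma phiKer_le_one (x : EuclideanSpace ℝ (Fin n)) : phiKer n s r x ≤ 1 := by
  unfold phiKer
  split_ifs
  exacts [le_rfl, min_le_left _ _]

lemma phiKer_nonneg (hr : 0 ≤ r) (x : EuclideanSpace ℝ (Fin n)) : 0 ≤ phiKer n s r x := by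
  unfold phiKer
  split_ifs
  exacts [zero_le_one, le_min zero_le_one (by positivity)]

lemma measurable_phiKer : Measurable (phiKer n s r) :=
  Measurable.ite (measurableSet_singleton 0) measurable_const
    (measurable_const.min ((measurable_const.div measurable_norm).pow_const s))

lemma phiKer_le_phiKer (hs : 0 ≤ s) (hr : 0 ≤ r) {x : EuclideanSpace ℝ (Fin n)}
    {y : EuclideanSpace ℝ (Fin m)} (h : ‖y‖ ≤ ‖x‖) : phiKer n s r x ≤ phiKer m s r y := by
  rcases eq_or_ne y 0 with rfl | hy
  · rw [phiKer_zero]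
    exact phiKer_le_one x
  have hx : x ≠ 0 := norm_pos_iff.1 ((norm_pos_iff.2 hy).trans_le h)
  rw [phiKer_of_ne_zero hx, phiKer_of_ne_zero hy]
  gcongr

lemma phiKer_le_rpow (hs : 0 ≤ s) (hr : 0 ≤ r) {d : ℝ} (hd : 0 < d)
    {x : EuclideanSpace ℝ (Fin n)} (h : d ≤ ‖x‖) : phiKer n s r x ≤ (r / d) ^ s := by
  rw [phiKer_of_ne_zero (norm_pos_iff.1 (hd.trans_le h))]
  exact (min_le_right _ _).trans (by gcongr)

lemma min_one_rpow_le_phiKer (hs : 0 ≤ s) (hr : 0 ≤ r) {d : ℝ} (hd : 0 < d)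
    {x : EuclideanSpace ℝ (Fin n)} (h : ‖x‖ ≤ d) : min 1 ((r / d) ^ s) ≤ phiKer n s r x := by
  rcases eq_or_ne x 0 with rfl | hx
  · rw [phiKer_zero]
    exact min_le_left _ _
  rw [phiKer_of_ne_zero hx]
  have := norm_pos_iff.2 hx
  gcongr

end Kernel

section Packing

variable {V : Type*} [NormedAddCommGroup V] [NormedSpace ℝ V] [FiniteDimensional ℝ V]
  [MeasurableSpace V] [BorelSpace V]

/-- Volume packing: disjoint balls of radius `s / 2` fit into a ball of radius `t + s / 2`. -/
theorem Finset.card_le_of_pairwise_le_dist {P : Finset V} {c : V} {s t : ℝ} (hs : 0 < s)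
    (ht : 0 ≤ t) (hsep : (P : Set V).Pairwise fun x y => s ≤ dist x y)
    (hP : ∀ x ∈ P, dist x c ≤ t) : (P.card : ℝ) ≤ (2 * t / s + 1) ^ Module.finrank ℝ V := by
  set μ : Measure V := Measure.addHaar
  set d := Module.finrank ℝ V
  have hs2 : 0 < s / 2 := half_pos hs
  have hdisj : (P : Set V).PairwiseDisjoint fun x => ball x (s / 2) :=
    fun x hx y hy hxy => ball_disjoint_ball (by linarith [hsep hx hy hxy])
  have hsub : (⋃ x ∈ P, ball x (s / 2)) ⊆ closedBall c (t + s / 2) := by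
    simp only [Set.iUnion_subset_iff]
    intro x hx y hy
    rw [mem_closedBall]
    linarith [dist_triangle y x c, mem_ball.1 hy, hP x hx]
  have hvol : (P.card : ℝ≥0∞) * (ENNReal.ofReal ((s / 2) ^ d) * μ (ball 0 1)) ≤
      ENNReal.ofReal ((t + s / 2) ^ d) * μ (ball 0 1) := by
    calc (P.card : ℝ≥0∞) * (ENNReal.ofReal ((s / 2) ^ d) * μ (ball 0 1))
        = ∑ x ∈ P, μ (ball x (s / 2)) := by
          simp [Measure.addHaar_ball_of_pos μ _ hs2, d]
      _ = μ (⋃ x ∈ P, ball x (s / 2)) :=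
          (measure_biUnion_finset hdisj fun _ _ => measurableSet_ball).symm
      _ ≤ μ (closedBall c (t + s / 2)) := measure_mono hsub
      _ = ENNReal.ofReal ((t + s / 2) ^ d) * μ (ball 0 1) :=
          Measure.addHaar_closedBall μ _ (by positivity)
  rw [← mul_assoc, ENNReal.mul_le_mul_iff_left (measure_ball_pos μ 0 one_pos).ne'
    measure_ball_lt_top.ne, ← ENNReal.ofReal_natCast, ← ENNReal.ofReal_mul (by positivity),
    ENNReal.ofReal_le_ofReal_iff (by positivity), ← le_div_iff₀ (by positivity), ← div_pow] at hvol
  refine hvol.trans_eq (congrArg (· ^ d) ?_)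
  field_simp

end Packing

lemma IsCompact.exists_finset_isSeparated_isCover {X : Type*} [PseudoMetricSpace X] {A : Set X}
    (hA : IsCompact A) {ε : ℝ≥0} (hε : ε ≠ 0) :
    ∃ P : Finset X, ↑P ⊆ A ∧ IsSeparated ε (P : Set X) ∧ IsCover ε A P := by
  obtain ⟨N, -, hN, hcov⟩ := exists_finite_isCover_of_isCompact (ε := ε / 2)
    (by simpa using hε) hA
  have hpack : packingNumber ε A ≠ ⊤ := by
    refine ne_top_of_le_ne_top (hN.encard_lt_top.ne) ?_
    calc packingNumber ε A = packingNumber (2 * (ε / 2)) A := by rw [mul_div_cancel₀ _ two_ne_zero]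
      _ ≤ externalCoveringNumber (ε / 2) A := packingNumber_two_mul_le_externalCoveringNumber _ _
      _ ≤ N.encard := hcov.externalCoveringNumber_le_encard
  have hfin : (maximalSeparatedSet ε A).Finite := by
    rw [← Set.encard_ne_top_iff, encard_maximalSeparatedSet hpack]
    exact hpack
  refine ⟨hfin.toFinset, ?_, ?_, ?_⟩ <;> rw [Set.Finite.coe_toFinset]
  exacts [maximalSeparatedSet_subset, isSeparated_maximalSeparatedSet,
    isCover_maximalSeparatedSet hpack]

lemma Metric.IsCover.coverNum_two_mul_le_card {X : Type*} [PseudoMetricSpace X] {ε : ℝ≥0}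
    {A : Set X} {P : Finset X} (hP : IsCover ε A P) : coverNum A (2 * ε) ≤ P.card := by
  refine (Nat.sInf_le ?_).trans (Finset.card_image_le (s := P) (f := (closedBall · ε)))
  refine ⟨P.image (closedBall · ε), _root_.rfl, ?_, ?_⟩
  · simp only [Finset.mem_image]
    rintro _ ⟨p, -, rfl⟩
    exact diam_closedBall ε.coe_nonneg
  · simpa [Set.sUnion_image] using hP.subset_iUnion_closedBall

section DyadicSum

variable {m : ℕ} {r : ℝ}

lemma phiKer_le_sum_dyadic (hr : 0 < r) {K : ℕ} {x : EuclideanSpace ℝ (Fin m)}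
    (hx : ‖x‖ < 2 ^ K * r) :
    phiKer m m r x ≤
      ∑ k ∈ Finset.range (K + 1), if ‖x‖ < 2 ^ k * r then (2 / 2 ^ k : ℝ) ^ m else 0 := by
  have hex : ∃ k : ℕ, ‖x‖ < 2 ^ k * r := ⟨K, hx⟩
  set j := Nat.find hex
  have hjK : j ∈ Finset.range (K + 1) := Finset.mem_range_succ_iff.2 (Nat.find_min' hex hx)
  have hφ : phiKer m m r x ≤ (2 / 2 ^ j : ℝ) ^ m := by
    rcases hj : j with _ | i
    · calc phiKer m m r x ≤ 1 := phiKer_le_one x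
        _ ≤ (2 / 2 ^ 0 : ℝ) ^ m := by norm_num [one_le_pow₀]
    · have hi : 2 ^ i * r ≤ ‖x‖ := not_lt.1 (Nat.find_min hex (by omega))
      calc phiKer m m r x ≤ (r / (2 ^ i * r)) ^ (m : ℝ) :=
            phiKer_le_rpow m.cast_nonneg hr.le (by positivity) hi
        _ = (2 / 2 ^ (i + 1) : ℝ) ^ m := by
            rw [rpow_natCast]
            field_simp
            ring
  refine hφ.trans ?_
  convert Finset.single_le_sum (f := fun k => if ‖x‖ < 2 ^ k * r then (2 / 2 ^ k : ℝ) ^ m else 0)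
    (fun k _ => by positivity) hjK
  simp [j, Nat.find_spec hex]

/-- The `k`-th dyadic shell around `p` holds at most `(4 * 2 ^ k + 1) ^ m` points of `P`, each
contributing at most `(2 / 2 ^ k) ^ m`. -/
lemma sum_phiKer_sub_le (hr : 0 < r) {P : Finset (EuclideanSpace ℝ (Fin m))}
    (hsep : (P : Set (EuclideanSpace ℝ (Fin m))).Pairwise fun x y => r / 2 ≤ dist x y)
    {p : EuclideanSpace ℝ (Fin m)} {K : ℕ} (hK : ∀ q ∈ P, dist p q < 2 ^ K * r) :
    ∑ q ∈ P, phiKer m m r (p - q) ≤ (K + 1) * 10 ^ m := by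
  have hshell : ∀ k : ℕ,
      ((P.filter fun q => dist p q < 2 ^ k * r).card : ℝ) * (2 / 2 ^ k) ^ m ≤ 10 ^ m := by
    intro k
    have hcard := Finset.card_le_of_pairwise_le_dist
      (P := P.filter fun q => dist p q < 2 ^ k * r) (c := p) (half_pos hr)
      (by positivity : 0 ≤ 2 ^ k * r) (hsep.mono (Finset.filter_subset _ P))
      fun q hq => by rw [dist_comm]; exact (Finset.mem_filter.1 hq).2.le
    rw [finrank_euclideanSpace_fin] at hcard
    calc _ ≤ (2 * (2 ^ k * r) / (r / 2) + 1) ^ m * (2 / 2 ^ k : ℝ) ^ m := by gcongr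
      _ = (8 + 2 / 2 ^ k : ℝ) ^ m := by
          rw [← mul_pow]
          congr 1
          field_simp
          ring
      _ ≤ 10 ^ m := by
          have : (2 : ℝ) / 2 ^ k ≤ 2 := div_le_self zero_le_two (one_le_pow₀ one_le_two)
          gcongr
          linarith
  calc ∑ q ∈ P, phiKer m m r (p - q)
      ≤ ∑ q ∈ P, ∑ k ∈ Finset.range (K + 1),
          if dist p q < 2 ^ k * r then (2 / 2 ^ k : ℝ) ^ m else 0 :=
        Finset.sum_le_sum fun q hq => by
          simpa only [dist_eq_norm] using
            phiKer_le_sum_dyadic hr (by simpa only [dist_eq_norm] using hK q hq)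
    _ = ∑ k ∈ Finset.range (K + 1),
          ((P.filter fun q => dist p q < 2 ^ k * r).card : ℝ) * (2 / 2 ^ k) ^ m := by
        rw [Finset.sum_comm]
        simp [Finset.sum_ite]
    _ ≤ ∑ _k ∈ Finset.range (K + 1), (10 : ℝ) ^ m := Finset.sum_le_sum fun k _ => hshell k
    _ = (K + 1) * 10 ^ m := by simp

end DyadicSum

section UniformMeasure

variable {α ι : Type*} [MeasurableSpace α]

lemma integral_average_dirac [MeasurableSingletonClass α] (P : Finset ι) (x : ι → α) (g : α → ℝ) :
    ∫ a, g a ∂((P.card : ℝ≥0∞)⁻¹ • ∑ i ∈ P, Measure.dirac (x i)) =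
      (P.card : ℝ)⁻¹ * ∑ i ∈ P, g (x i) := by
  rw [integral_smul_measure, integral_finsetSum_measure fun i _ =>
    integrable_dirac (by simp)]
  simp [ENNReal.toReal_inv]

lemma isProbabilityMeasure_average_dirac {P : Finset ι} (hP : P.Nonempty) (x : ι → α) :
    IsProbabilityMeasure ((P.card : ℝ≥0∞)⁻¹ • ∑ i ∈ P, Measure.dirac (x i)) := by
  constructor
  simp [ENNReal.inv_mul_cancel (Nat.cast_ne_zero.2 hP.card_pos.ne') (ENNReal.natCast_ne_top _)]

lemma dirac_apply_compl_closure [TopologicalSpace α] [OpensMeasurableSpace α] {A : Set α} {a : α}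
    (ha : a ∈ A) : Measure.dirac a (closure A)ᶜ = 0 := by
  simp [Measure.dirac_apply' _ isClosed_closure.isOpen_compl.measurableSet, subset_closure ha]

end UniformMeasure

section Capacity

variable {n : ℕ} {s r : ℝ} {E : Set (EuclideanSpace ℝ (Fin n))}

noncomputable def energy (n : ℕ) (s r : ℝ) (μ : Measure (EuclideanSpace ℝ (Fin n))) : ℝ :=
  ∫ x, ∫ y, phiKer n s r (x - y) ∂μ ∂μ

def energySet (n : ℕ) (s r : ℝ) (E : Set (EuclideanSpace ℝ (Fin n))) : Set ℝ :=
  {I | ∃ μ : Measure (EuclideanSpace ℝ (Fin n)),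
    IsProbabilityMeasure μ ∧ μ (closure E)ᶜ = 0 ∧ I = energy n s r μ}

lemma capacity_eq_inv_sInf_energySet : capacity n s r E = (sInf (energySet n s r E))⁻¹ := rfl

lemma norm_phiKer_le_one (hr : 0 ≤ r) (x : EuclideanSpace ℝ (Fin n)) : ‖phiKer n s r x‖ ≤ 1 := by
  rw [Real.norm_of_nonneg (phiKer_nonneg hr x)]
  exact phiKer_le_one x

lemma integrable_phiKer_sub (hr : 0 ≤ r) (μ : Measure (EuclideanSpace ℝ (Fin n)))
    [IsFiniteMeasure μ] (x : EuclideanSpace ℝ (Fin n)) :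
    Integrable (fun y => phiKer n s r (x - y)) μ :=
  .of_bound (measurable_phiKer.comp (measurable_const.sub measurable_id)).aestronglyMeasurable 1
    (.of_forall fun y => norm_phiKer_le_one hr (x - y))

lemma integrable_potential (hr : 0 ≤ r) (μ : Measure (EuclideanSpace ℝ (Fin n)))
    [IsProbabilityMeasure μ] : Integrable (fun x => ∫ y, phiKer n s r (x - y) ∂μ) μ := by
  have hmeas : StronglyMeasurable fun p : EuclideanSpace ℝ (Fin n) × EuclideanSpace ℝ (Fin n) =>
      phiKer n s r (p.1 - p.2) :=
    (measurable_phiKer.comp (measurable_fst.sub measurable_snd)).stronglyMeasurable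
  refine .of_bound hmeas.integral_prod_right'.aestronglyMeasurable 1 (.of_forall fun x => ?_)
  simpa using norm_integral_le_of_norm_le_const (μ := μ)
    (.of_forall fun y => norm_phiKer_le_one (s := s) hr (x - y))

lemma energy_dirac (a : EuclideanSpace ℝ (Fin n)) : energy n s r (Measure.dirac a) = 1 := by
  simp [energy, phiKer_zero]

/-- On a set of diameter `D`, the kernel never drops below `min 1 ((r / (D + 1)) ^ s)`. -/
lemma min_one_rpow_le_energy (hs : 0 ≤ s) (hr : 0 ≤ r) (hE : Bornology.IsBounded E)
    {μ : Measure (EuclideanSpace ℝ (Fin n))} [IsProbabilityMeasure μ] (hμ : μ (closure E)ᶜ = 0) :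
    min 1 ((r / (diam E + 1)) ^ s) ≤ energy n s r μ := by
  set δ := min 1 ((r / (diam E + 1)) ^ s)
  have hD : 0 < diam E + 1 := by linarith [diam_nonneg (s := E)]
  have hae : ∀ᵐ x ∂μ, x ∈ closure E := ae_iff.2 hμ
  have hconst : ∀ {f : EuclideanSpace ℝ (Fin n) → ℝ}, Integrable f μ → (∀ᵐ x ∂μ, δ ≤ f x) →
      δ ≤ ∫ x, f x ∂μ := fun hf h => by
    simpa using integral_mono_ae (integrable_const δ) hf h
  refine hconst (integrable_potential hr μ) (hae.mono fun x hx => ?_)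
  refine hconst (integrable_phiKer_sub hr μ x) (hae.mono fun y hy => ?_)
  refine min_one_rpow_le_phiKer hs hr hD ?_
  rw [← dist_eq_norm, ← diam_closure]
  exact (dist_le_diam_of_mem hE.closure hx hy).trans (by linarith)

lemma min_one_rpow_mem_lowerBounds_energySet (hs : 0 ≤ s) (hr : 0 ≤ r)
    (hE : Bornology.IsBounded E) :
    min 1 ((r / (diam E + 1)) ^ s) ∈ lowerBounds (energySet n s r E) := by
  rintro _ ⟨μ, _, hμ, rfl⟩
  exact min_one_rpow_le_energy hs hr hE hμ

lemma pos_sInf_energySet (hs : 0 ≤ s) (hr : 0 < r) (hE : Bornology.IsBounded E)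
    (hne : (energySet n s r E).Nonempty) : 0 < sInf (energySet n s r E) := by
  have hD : 0 < diam E + 1 := by linarith [diam_nonneg (s := E)]
  exact (lt_min one_pos (rpow_pos_of_pos (div_pos hr hD) s)).trans_le
    (le_csInf hne (min_one_rpow_mem_lowerBounds_energySet hs hr.le hE))

lemma inv_energy_le_capacity (hs : 0 ≤ s) (hr : 0 < r) (hE : Bornology.IsBounded E)
    {μ : Measure (EuclideanSpace ℝ (Fin n))} [IsProbabilityMeasure μ] (hμ : μ (closure E)ᶜ = 0) :
    (energy n s r μ)⁻¹ ≤ capacity n s r E := by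
  have hmem : energy n s r μ ∈ energySet n s r E := ⟨μ, inferInstance, hμ, rfl⟩
  exact inv_anti₀ (pos_sInf_energySet hs hr hE ⟨_, hmem⟩)
    (csInf_le ⟨_, min_one_rpow_mem_lowerBounds_energySet hs hr.le hE⟩ hmem)

lemma one_le_capacity (hs : 0 ≤ s) (hr : 0 < r) (hE : Bornology.IsBounded E) (hne : E.Nonempty) :
    1 ≤ capacity n s r E := by
  obtain ⟨a, ha⟩ := hne
  simpa [energy_dirac] using inv_energy_le_capacity hs hr hE (dirac_apply_compl_closure ha)

lemma capacity_le_rpow (hs : 0 ≤ s) (hr : 0 < r) (hrE : r ≤ diam E + 1)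
    (hE : Bornology.IsBounded E) (hne : E.Nonempty) :
    capacity n s r E ≤ ((diam E + 1) / r) ^ s := by
  obtain ⟨a, ha⟩ := hne
  have hD : 0 < diam E + 1 := by linarith [diam_nonneg (s := E)]
  have hmem : (1 : ℝ) ∈ energySet n s r E :=
    ⟨_, inferInstance, dirac_apply_compl_closure ha, (energy_dirac a).symm⟩
  have hδ : (r / (diam E + 1)) ^ s ≤ sInf (energySet n s r E) := by
    simpa [rpow_le_one (by positivity) ((div_le_one hD).2 hrE) hs] using
      le_csInf ⟨1, hmem⟩ (min_one_rpow_mem_lowerBounds_energySet hs hr.le hE)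
  rw [capacity_eq_inv_sInf_energySet, ← inv_div, inv_rpow (by positivity)]
  exact inv_anti₀ (by positivity) hδ

/-- Test the capacity against the uniform measure on the points `x i`. -/
lemma card_le_mul_capacity (hs : 0 ≤ s) (hr : 0 < r) (hE : Bornology.IsBounded E)
    {ι : Type*} {P : Finset ι} (hP : P.Nonempty) {x : ι → EuclideanSpace ℝ (Fin n)}
    (hx : ∀ i ∈ P, x i ∈ E) {Λ : ℝ} (hΛ : ∀ i ∈ P, ∑ j ∈ P, phiKer n s r (x i - x j) ≤ Λ) :
    (P.card : ℝ) ≤ Λ * capacity n s r E := by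
  set μ : Measure (EuclideanSpace ℝ (Fin n)) := (P.card : ℝ≥0∞)⁻¹ • ∑ i ∈ P, Measure.dirac (x i)
  have := isProbabilityMeasure_average_dirac hP x
  have hμ : μ (closure E)ᶜ = 0 := by
    simpa [μ] using fun i hi => subset_closure (hx i hi)
  have hN : (0 : ℝ) < P.card := Nat.cast_pos.2 hP.card_pos
  have henergy : energy n s r μ ≤ Λ / P.card := by
    simp only [energy, μ, integral_average_dirac]
    calc (P.card : ℝ)⁻¹ * ∑ i ∈ P, (P.card : ℝ)⁻¹ * ∑ j ∈ P, phiKer n s r (x i - x j)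
        ≤ (P.card : ℝ)⁻¹ * ∑ _i ∈ P, (P.card : ℝ)⁻¹ * Λ := by gcongr with i hi; exact hΛ i hi
      _ = Λ / P.card := by rw [Finset.sum_const, nsmul_eq_mul]; field_simp
  have hpos : 0 < energy n s r μ := by
    have hD : 0 < diam E + 1 := by linarith [diam_nonneg (s := E)]
    exact (lt_min one_pos (rpow_pos_of_pos (div_pos hr hD) s)).trans_le
      (min_one_rpow_le_energy hs hr.le hE hμ)
  have hΛ : 0 < Λ := (div_pos_iff_of_pos_right hN).1 (hpos.trans_le henergy)
  calc (P.card : ℝ) = Λ * (Λ / P.card)⁻¹ := by field_simp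
    _ ≤ Λ * (energy n s r μ)⁻¹ := by gcongr
    _ ≤ Λ * capacity n s r E := by gcongr; exact inv_energy_le_capacity hs hr hE hμ

end Capacity

lemma tendsto_log_const_mul_div_atTop (a : ℝ) :
    Tendsto (fun x => log (a * x) / x) atTop (𝓝 0) := by
  rcases eq_or_ne a 0 with rfl | ha
  · simp
  have hlog : Tendsto (fun x => log x / x) atTop (𝓝 0) := by
    simpa using tendsto_pow_log_div_mul_add_atTop 1 0 1 one_ne_zero
  refine (by simpa using (tendsto_const_nhds (x := log a)).div_atTop tendsto_id |>.add hlog :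
    Tendsto (fun x => log a / x + log x / x) atTop (𝓝 0)).congr' ?_
  filter_upwards [eventually_gt_atTop 0] with x hx
  rw [log_mul ha hx.ne', add_div]

lemma Filter.liminf_le_liminf_of_le_add_of_tendsto_zero {α : Type*} {l : Filter α} [l.NeBot]
    {u v e : α → ℝ} (hu : IsBoundedUnder (· ≥ ·) l u) (hv : IsBoundedUnder (· ≤ ·) l v)
    (hv' : IsBoundedUnder (· ≥ ·) l v) (he : Tendsto e l (𝓝 0))
    (h : ∀ᶠ x in l, u x ≤ v x + e x) : liminf u l ≤ liminf v l := by
  refine le_of_forall_pos_le_add fun ε hε => ?_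
  rw [← liminf_add_const l v ε hv.isCoboundedUnder_ge hv']
  refine liminf_le_liminf ?_ hu (isBoundedUnder_le_add hv isBoundedUnder_const).isCoboundedUnder_ge
  filter_upwards [h, he.eventually (ge_mem_nhds hε)] with x hx hex
  linarith

/-- A factor of order `log (1 / r)` does not change the exponent of growth. -/
lemma liminf_log_div_neg_log_le {N : ℝ → ℕ} {C : ℝ → ℝ} {a D s : ℝ} (ha : 0 < a) (hD : 0 < D)
    (hN : ∀ᶠ r in 𝓝[>] 0, (N r : ℝ) ≤ a * -log r * C r)
    (hC : ∀ᶠ r in 𝓝[>] 0, 1 ≤ C r ∧ C r ≤ (D / r) ^ s) :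
    liminf (fun r => log (N r) / -log r) (𝓝[>] 0) ≤
      liminf (fun r => log (C r) / -log r) (𝓝[>] 0) := by
  have ht : Tendsto (fun r => -log r) (𝓝[>] 0) atTop :=
    tendsto_neg_atBot_atTop.comp tendsto_log_nhdsGT_zero
  have ht1 := ht.eventually_ge_atTop (max 1 a⁻¹)
  have hr := self_mem_nhdsWithin (s := Set.Ioi (0 : ℝ)) (a := 0)
  refine liminf_le_liminf_of_le_add_of_tendsto_zero (e := fun r => log (a * -log r) / -log r)
    ?_ ?_ ?_ ((tendsto_log_const_mul_div_atTop a).comp ht) ?_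
  · refine isBoundedUnder_of_eventually_ge (a := 0) ?_
    filter_upwards [ht1] with r htr
    exact div_nonneg (log_natCast_nonneg _) (by linarith [le_max_left 1 a⁻¹])
  · have hbound : Tendsto (fun r => s * (log D / -log r) + s) (𝓝[>] 0) (𝓝 (s * 0 + s)) :=
      ((tendsto_const_nhds.div_atTop ht).const_mul s).add_const s
    refine hbound.isBoundedUnder_le.mono_le ?_
    filter_upwards [hC, ht1, hr] with r hCr htr hr
    have htpos : 0 < -log r := by linarith [le_max_left 1 a⁻¹]
    rw [div_le_iff₀ htpos]
    calc log (C r) ≤ log ((D / r) ^ s) := log_le_log (by linarith) hCr.2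
      _ = (s * (log D / -log r) + s) * -log r := by
          rw [log_rpow (div_pos hD hr), log_div hD.ne' hr.ne', add_mul, mul_assoc,
            div_mul_cancel₀ _ htpos.ne']
          ring
  · refine isBoundedUnder_of_eventually_ge (a := 0) ?_
    filter_upwards [hC, ht1] with r hCr htr
    exact div_nonneg (log_nonneg hCr.1) (by linarith [le_max_left 1 a⁻¹])
  · filter_upwards [hN, hC, ht1] with r hNr hCr htr
    have htpos : 0 < -log r := by linarith [le_max_left 1 a⁻¹]
    have hat : 1 ≤ a * -log r := (inv_le_iff_one_le_mul₀' ha).1 ((le_max_right 1 a⁻¹).trans htr)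
    rw [← add_div, div_le_div_iff_of_pos_right htpos]
    rcases (N r).eq_zero_or_pos with h0 | hpos
    · rw [h0, Nat.cast_zero, log_zero]
      exact add_nonneg (log_nonneg hCr.1) (log_nonneg hat)
    · calc log (N r) ≤ log (a * -log r * C r) := log_le_log (by exact_mod_cast hpos) hNr
        _ = log (C r) + log (a * -log r) := by
            rw [log_mul (zero_lt_one.trans_le hat).ne' (zero_lt_one.trans_le hCr.1).ne', add_comm]

lemma exists_lt_two_pow_mul {d r : ℝ} (hd : 0 ≤ d) (hr : 0 < r) (hr1 : r ≤ 1) :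
    ∃ K : ℕ, d < 2 ^ K * r ∧ (K : ℝ) ≤ 2 * (log (d + 1) - log r) + 1 := by
  set x := 2 * (log (d + 1) - log r)
  have hlog : 0 ≤ log (d + 1) - log r := by
    linarith [log_nonneg (by linarith : 1 ≤ d + 1), log_nonpos hr.le hr1]
  refine ⟨⌈x⌉₊, ?_, (Nat.ceil_lt_add_one (by positivity)).le⟩
  have h2 : (d + 1) / r ≤ 2 ^ ⌈x⌉₊ :=
    calc (d + 1) / r = exp (log (d + 1) - log r) := by
          rw [exp_sub, exp_log (by linarith), exp_log hr]
      _ ≤ exp (⌈x⌉₊ * log 2) := by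
          gcongr
          nlinarith [Nat.le_ceil x, log_two_gt_d9]
      _ = 2 ^ ⌈x⌉₊ := by rw [← rpow_natCast, rpow_def_of_pos two_pos, mul_comm]
  rw [div_le_iff₀ hr] at h2
  linarith

section CoveringEstimate

variable {n m : ℕ} {r : ℝ} {E : Set (EuclideanSpace ℝ (Fin n))}

theorem coverNum_image_le_mul_capacity (hE : IsCompact E) (hne : E.Nonempty)
    {f : EuclideanSpace ℝ (Fin n) → EuclideanSpace ℝ (Fin m)} (hf : LipschitzWith 1 f)
    (hr : 0 < r) {K : ℕ} (hK : diam (f '' E) < 2 ^ K * r) :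
    (coverNum (f '' E) r : ℝ) ≤ (K + 1) * 10 ^ m * capacity n m r E := by
  have hfE : IsCompact (f '' E) := hE.image hf.continuous
  obtain ⟨P, hPF, hPsep, hPcov⟩ :=
    hfE.exists_finset_isSeparated_isCover (ε := (r / 2).toNNReal) (by simpa using hr)
  have hsep : (P : Set (EuclideanSpace ℝ (Fin m))).Pairwise fun p q => r / 2 ≤ dist p q :=
    hPsep.mono' fun p q h => by
      rw [edist_dist] at h
      exact (ENNReal.ofReal_lt_ofReal_iff'.1 h).1.le
  have hcover : coverNum (f '' E) r ≤ P.card := by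
    simpa [Real.coe_toNNReal _ (half_pos hr).le, mul_div_cancel₀] using
      hPcov.coverNum_two_mul_le_card
  choose! g hgE hfg using fun p (hp : p ∈ P) => hPF hp
  have hpot : ∀ p ∈ P, ∑ q ∈ P, phiKer n m r (g p - g q) ≤ (K + 1) * 10 ^ m := by
    intro p hp
    calc ∑ q ∈ P, phiKer n m r (g p - g q) ≤ ∑ q ∈ P, phiKer m m r (p - q) := by
          gcongr with q hq
          refine phiKer_le_phiKer m.cast_nonneg hr.le ?_
          simpa [← dist_eq_norm, hfg p hp, hfg q hq] using hf.dist_le_mul (g p) (g q)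
      _ ≤ (K + 1) * 10 ^ m := sum_phiKer_sub_le hr hsep fun q hq =>
          (dist_le_diam_of_mem hfE.isBounded (hPF hp) (hPF hq)).trans_lt hK
  calc (coverNum (f '' E) r : ℝ) ≤ P.card := by exact_mod_cast hcover
    _ ≤ (K + 1) * 10 ^ m * capacity n m r E :=
        card_le_mul_capacity m.cast_nonneg hr hE.isBounded
          (Finset.coe_nonempty.1 (hPcov.nonempty (hne.image f))) hgE hpot

theorem coverNum_image_le_neg_log_mul_capacity (hE : IsCompact E) (hne : E.Nonempty)
    {f : EuclideanSpace ℝ (Fin n) → EuclideanSpace ℝ (Fin m)} (hf : LipschitzWith 1 f)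
    (hr : 0 < r) (hr1 : r ≤ exp (-1)) :
    (coverNum (f '' E) r : ℝ) ≤
      (2 * log (diam (f '' E) + 1) + 4) * 10 ^ m * -log r * capacity n m r E := by
  have ht : 1 ≤ -log r := by linarith [(log_le_iff_le_exp hr).2 hr1]
  have hL : 0 ≤ log (diam (f '' E) + 1) := log_nonneg (by linarith [diam_nonneg (s := f '' E)])
  obtain ⟨K, hK, hKle⟩ := exists_lt_two_pow_mul (diam_nonneg (s := f '' E)) hr (hr1.trans (by simp))
  refine (coverNum_image_le_mul_capacity hE hne hf hr hK).trans ?_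
  have hC := one_le_capacity m.cast_nonneg hr hE.isBounded hne
  calc ((K : ℝ) + 1) * 10 ^ m * capacity n m r E
      ≤ ((2 * log (diam (f '' E) + 1) + 4) * -log r) * 10 ^ m * capacity n m r E := by
        gcongr
        nlinarith
    _ = _ := by ring

end CoveringEstimate

theorem stmt_19_general (n m : ℕ)
    (E : Set (EuclideanSpace ℝ (Fin n))) (hne : E.Nonempty) (hE : IsCompact E)
    (f : EuclideanSpace ℝ (Fin n) → EuclideanSpace ℝ (Fin m)) (hf : LipschitzWith 1 f) :
    lowerBoxDim (f '' E) ≤ lowerProfile n m E := by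
  have ha : 0 < (2 * log (diam (f '' E) + 1) + 4) * 10 ^ m :=
    mul_pos (by linarith [log_nonneg (by linarith [diam_nonneg (s := f '' E)] :
      1 ≤ diam (f '' E) + 1)]) (by positivity)
  have hD : 0 < diam E + 1 := by linarith [diam_nonneg (s := E)]
  unfold lowerBoxDim lowerProfile
  refine liminf_log_div_neg_log_le (s := m) ha hD ?_ ?_
  · filter_upwards [Ioo_mem_nhdsGT (exp_pos (-1))] with r hr
    exact coverNum_image_le_neg_log_mul_capacity hE hne hf hr.1 hr.2.le
  · filter_upwards [Ioo_mem_nhdsGT one_pos] with r hr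
    exact ⟨one_le_capacity m.cast_nonneg hr.1 hE.isBounded hne,
      capacity_le_rpow m.cast_nonneg hr.1 (by linarith [hr.2, diam_nonneg (s := E)])
        hE.isBounded hne⟩

theorem stmt_19 (n m : ℕ) (hn : 1 ≤ n) (hm : 1 ≤ m)
    (E : Set (EuclideanSpace ℝ (Fin n))) (hne : E.Nonempty) (hE : IsCompact E)
    (f : EuclideanSpace ℝ (Fin n) → EuclideanSpace ℝ (Fin m)) (hf : LipschitzWith 1 f) :
    lowerBoxDim (f '' E) ≤ lowerProfile n m E :=
  stmt_19_general n m E hne hE f hf
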